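/- Let a ∈ ℝ, b ∈ ℝ ∪ {+∞} with a < b, and let c ≤ d be real numbers. Then the k-vector space Hom(k_{[a,b)}, k_{[c,d]}) is one-dimensional over k if a ≤ c < b, and is zero otherwise. -/

import Mathlib

open CategoryTheory TopologicalSpace Set Topology

noncomputable section

variable (k : Type) [Field k]

/-- The support of the function `s : V ∩ I → k` is closed in `V`. -/
def SuppClosedIn (I V : Set ℝ) (s : ↥(V ∩ I) → k) : Prop :=
  ∀ x ∈ V, x ∈ closure {y : ℝ | ∃ h : y ∈ V ∩ I, s ⟨y, h⟩ ≠ 0} →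
    ∃ h : x ∈ V ∩ I, s ⟨x, h⟩ ≠ 0

lemma zero_locConst (I V : Set ℝ) :
    IsLocallyConstant (0 : ↥(V ∩ I) → k) ∧ SuppClosedIn k I V 0 := by
  constructor
  · exact IsLocallyConstant.const 0
  · intro x _ hx
    exfalso
    have h0 : {y : ℝ | ∃ h : y ∈ V ∩ I, (0 : ↥(V ∩ I) → k) ⟨y, h⟩ ≠ 0} = ∅ := by
      ext y; simp
    rw [h0, closure_empty] at hx
    exact hx

/-- The sections over `V` of the sheaf `k_I`: locally constant functions on `V ∩ I`
whose support is closed in `V`. -/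
def secSub (I V : Set ℝ) : Submodule k (↥(V ∩ I) → k) where
  carrier := {s | IsLocallyConstant s ∧ SuppClosedIn k I V s}
  zero_mem' := zero_locConst k I V
  add_mem' := by
    rintro s t ⟨hslc, hscl⟩ ⟨htlc, htcl⟩
    have hlc : IsLocallyConstant (s + t) := hslc.comp₂ htlc (· + ·)
    refine ⟨hlc, ?_⟩
    intro x hxV hxcl
    have hsub : {y : ℝ | ∃ h : y ∈ V ∩ I, (s + t) ⟨y, h⟩ ≠ 0}
        ⊆ {y : ℝ | ∃ h : y ∈ V ∩ I, s ⟨y, h⟩ ≠ 0}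
          ∪ {y : ℝ | ∃ h : y ∈ V ∩ I, t ⟨y, h⟩ ≠ 0} := by
      rintro y ⟨h, hy⟩
      by_cases hsy : s ⟨y, h⟩ = 0
      · refine Or.inr ⟨h, fun h0 => hy ?_⟩
        show s ⟨y, h⟩ + t ⟨y, h⟩ = 0
        rw [hsy, h0, add_zero]
      · exact Or.inl ⟨h, hsy⟩
    have hxVI : x ∈ V ∩ I := by
      have hcl2 := closure_mono hsub hxcl
      rw [closure_union] at hcl2
      rcases hcl2 with h | h
      · exact (hscl x hxV h).choose
      · exact (htcl x hxV h).choose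
    refine ⟨hxVI, ?_⟩
    have hA : IsClosed {y : ↥(V ∩ I) | (s + t) y ≠ 0} := by
      have h1 : IsOpen ((s + t) ⁻¹' {0}) := hlc {0}
      have h2 := h1.isClosed_compl
      have h3 : ((s + t) ⁻¹' {0})ᶜ = {y : ↥(V ∩ I) | (s + t) y ≠ 0} := by
        ext y; simp
      exact h3 ▸ h2
    have hmem : (⟨x, hxVI⟩ : ↥(V ∩ I)) ∈ closure {y : ↥(V ∩ I) | (s + t) y ≠ 0} := by
      rw [closure_subtype]
      have himg : Subtype.val '' {y : ↥(V ∩ I) | (s + t) y ≠ 0}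
          = {y : ℝ | ∃ h : y ∈ V ∩ I, (s + t) ⟨y, h⟩ ≠ 0} := by
        ext y
        constructor
        · rintro ⟨z, hz, rfl⟩; exact ⟨z.2, hz⟩
        · rintro ⟨h, hy⟩; exact ⟨⟨y, h⟩, hy, rfl⟩
      rw [himg]
      exact hxcl
    have := hA.closure_eq ▸ hmem
    exact this
  smul_mem' := by
    intro c s hs
    rcases hs with ⟨hlc, hcl⟩
    by_cases hc : c = 0
    · subst hc
      rw [zero_smul]
      exact zero_locConst k I V
    · constructor
      · exact hlc.comp (fun a => c • a)
      · intro x hxV hxcl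
        have hset : {y : ℝ | ∃ h : y ∈ V ∩ I, (c • s) ⟨y, h⟩ ≠ 0}
            = {y : ℝ | ∃ h : y ∈ V ∩ I, s ⟨y, h⟩ ≠ 0} := by
          ext y
          constructor
          · rintro ⟨h, hy⟩
            refine ⟨h, fun h0 => hy ?_⟩
            show c • s ⟨y, h⟩ = 0
            rw [h0, smul_zero]
          · rintro ⟨h, hy⟩
            exact ⟨h, by simpa [smul_eq_zero, hc] using hy⟩
        rw [hset] at hxcl
        obtain ⟨h, hy⟩ := hcl x hxV hxcl
        exact ⟨h, by simpa [smul_eq_zero, hc] using hy⟩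
/-- Restriction of sections. -/
def resFun (I : Set ℝ) {V W : Set ℝ} (h : W ⊆ V) (s : ↥(V ∩ I) → k) : ↥(W ∩ I) → k :=
  fun y => s ⟨y.1, ⟨h y.2.1, y.2.2⟩⟩

lemma resFun_mem (I : Set ℝ) {V W : Set ℝ} (h : W ⊆ V) (s : ↥(V ∩ I) → k)
    (hs : s ∈ secSub k I V) : resFun k I h s ∈ secSub k I W := by
  obtain ⟨hlc, hcl⟩ := hs
  constructor
  · exact hlc.comp_continuous (Continuous.subtype_mk continuous_subtype_val _)
  · intro x hxW hxcl
    have hsub : {y : ℝ | ∃ h' : y ∈ W ∩ I, resFun k I h s ⟨y, h'⟩ ≠ 0}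
        ⊆ {y : ℝ | ∃ h' : y ∈ V ∩ I, s ⟨y, h'⟩ ≠ 0} := by
      rintro y ⟨h', hy⟩
      exact ⟨⟨h h'.1, h'.2⟩, hy⟩
    obtain ⟨hxVI, hne⟩ := hcl x (h hxW) (closure_mono hsub hxcl)
    exact ⟨⟨hxW, hxVI.2⟩, hne⟩

/-- Restriction as a linear map. -/
def resLM (I : Set ℝ) {V W : Set ℝ} (h : W ⊆ V) : secSub k I V →ₗ[k] secSub k I W where
  toFun s := ⟨resFun k I h s.1, resFun_mem k I h s.1 s.2⟩
  map_add' s t := rfl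
  map_smul' c s := rfl

/-- The presheaf `k_I` on `ℝ`. -/
def intervalPresheaf (I : Set ℝ) : TopCat.Presheaf (ModuleCat.{0} k) (TopCat.of ℝ) where
  obj V := ModuleCat.of k (secSub k I V.unop.1)
  map {V W} f := ModuleCat.ofHom (resLM k I (leOfHom f.unop))
  map_id V := rfl
  map_comp f g := rfl
theorem intervalPresheaf_isSheaf (I : Set ℝ) : (intervalPresheaf k I).IsSheaf := by
  classical
  rw [TopCat.Presheaf.isSheaf_iff_isSheafUniqueGluing]
  intro ι U sf hcomp
  change ∀ i, secSub k I (U i).1 at sf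
  -- pointwise compatibility
  have key : ∀ (i j : ι) (x : ℝ) (hxi : x ∈ (U i).1 ∩ I) (hxj : x ∈ (U j).1 ∩ I),
      (sf i).1 ⟨x, hxi⟩ = (sf j).1 ⟨x, hxj⟩ := by
    intro i j x hxi hxj
    have h := hcomp i j
    have hmem : x ∈ (U i ⊓ U j).1 ∩ I := ⟨⟨hxi.1, hxj.1⟩, hxi.2⟩
    have h2 := congrFun (congrArg Subtype.val h) ⟨x, hmem⟩
    exact h2
  have hmemS : ∀ x : ↥((iSup U : Opens (TopCat.of ℝ)).1 ∩ I), ∃ i, x.1 ∈ U i := by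
    intro x
    exact Opens.mem_iSup.mp x.2.1
  set idx : ↥((iSup U : Opens (TopCat.of ℝ)).1 ∩ I) → ι := fun x => (hmemS x).choose with hidxdef
  have hidx : ∀ x, x.1 ∈ U (idx x) := fun x => (hmemS x).choose_spec
  set s₀ : ↥((iSup U : Opens (TopCat.of ℝ)).1 ∩ I) → k :=
    fun x => (sf (idx x)).1 ⟨x.1, ⟨hidx x, x.2.2⟩⟩ with hs₀def
  have hs₀ : ∀ (x : ↥((iSup U : Opens (TopCat.of ℝ)).1 ∩ I)) (i : ι) (hx : x.1 ∈ U i),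
      s₀ x = (sf i).1 ⟨x.1, ⟨hx, x.2.2⟩⟩ :=
    fun x i hx => key (idx x) i x.1 ⟨hidx x, x.2.2⟩ ⟨hx, x.2.2⟩
  have hlc : IsLocallyConstant s₀ := by
    rw [IsLocallyConstant.iff_exists_open]
    intro x
    obtain ⟨i, hi⟩ := hmemS x
    have hlci : IsLocallyConstant ((sf i).1 : ↥((U i).1 ∩ I) → k) := (sf i).2.1
    obtain ⟨W, hWopen, hpW, hWconst⟩ := hlci.exists_open (⟨x.1, ⟨hi, x.2.2⟩⟩ : ↥((U i).1 ∩ I))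
    obtain ⟨O, hOopen, hWO⟩ := isOpen_induced_iff.mp hWopen
    subst hWO
    refine ⟨Subtype.val ⁻¹' (O ∩ (U i).1), (hOopen.inter (U i).2).preimage continuous_subtype_val,
      ⟨hpW, hi⟩, ?_⟩
    intro y hy
    have hyi : y.1 ∈ U i := hy.2
    rw [hs₀ y i hyi, hs₀ x i hi]
    exact hWconst ⟨y.1, ⟨hyi, y.2.2⟩⟩ hy.1
  have hscl : SuppClosedIn k I (iSup U : Opens (TopCat.of ℝ)).1 s₀ := by
    intro x hxS hxcl
    obtain ⟨i, hi⟩ := Opens.mem_iSup.mp hxS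
    have h1 : x ∈ closure ({y : ℝ | ∃ h : y ∈ (iSup U : Opens (TopCat.of ℝ)).1 ∩ I, s₀ ⟨y, h⟩ ≠ 0}
        ∩ (U i).1) := by
      rw [mem_closure_iff] at hxcl ⊢
      intro O hO hxO
      obtain ⟨z, hz⟩ := hxcl (O ∩ (U i).1) (hO.inter (U i).2) ⟨hxO, hi⟩
      exact ⟨z, hz.1.1, hz.2, hz.1.2⟩
    have hsub : {y : ℝ | ∃ h : y ∈ (iSup U : Opens (TopCat.of ℝ)).1 ∩ I, s₀ ⟨y, h⟩ ≠ 0}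
        ∩ (U i).1 ⊆ {y : ℝ | ∃ h : y ∈ (U i).1 ∩ I, (sf i).1 ⟨y, h⟩ ≠ 0} := by
      rintro y ⟨⟨hy, hne⟩, hyi⟩
      refine ⟨⟨hyi, hy.2⟩, ?_⟩
      rw [← hs₀ ⟨y, hy⟩ i hyi]
      exact hne
    obtain ⟨hyUI, hne⟩ := (sf i).2.2 x hi (closure_mono hsub h1)
    refine ⟨⟨hxS, hyUI.2⟩, ?_⟩
    rw [hs₀ ⟨x, ⟨hxS, hyUI.2⟩⟩ i hyUI.1]
    exact hne
  refine ⟨⟨s₀, hlc, hscl⟩, ?_, ?_⟩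
  · intro i
    apply Subtype.ext
    funext y
    exact hs₀ ⟨y.1, ⟨leOfHom (Opens.leSupr U i) y.2.1, y.2.2⟩⟩ i y.2.1
  · intro t ht
    apply Subtype.ext
    funext x
    have h := ht (idx x)
    have h2 := congrFun (congrArg Subtype.val h) ⟨x.1, ⟨hidx x, x.2.2⟩⟩
    exact h2

/-- The sheaf `k_I` on `ℝ` for an interval `I`: locally constant functions on `V ∩ I`
whose support is closed in `V`. -/
def intervalSheaf (I : Set ℝ) :
    Sheaf (Opens.grothendieckTopology (TopCat.of ℝ)) (ModuleCat.{0} k) :=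
  ⟨intervalPresheaf k I, intervalPresheaf_isSheaf k I⟩
/-- The category of sheaves of `k`-vector spaces on `ℝ`. -/
abbrev RealSheafCat := Sheaf (Opens.grothendieckTopology (TopCat.of ℝ)) (ModuleCat.{0} k)

instance sheafHomSMul (F G : RealSheafCat k) : SMul k (F ⟶ G) :=
  ⟨fun c f => ⟨c • f.hom⟩⟩

instance sheafHomModule (F G : RealSheafCat k) : Module k (F ⟶ G) :=
  Function.Injective.module k
    { toFun := fun f : F ⟶ G => f.hom
      map_zero' := rfl
      map_add' := fun _ _ => rfl }
    (fun _ _ h => Sheaf.hom_ext h) (fun _ _ => rfl)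

instance : HasExt.{1} (RealSheafCat k) := by
  letI := HasDerivedCategory.standard (RealSheafCat k)
  exact hasExt_of_hasDerivedCategory _

/-- The interval `(a, b)` with possibly infinite endpoints. -/
def Ioo' (a b : EReal) : Set ℝ := {x : ℝ | a < (x : EReal) ∧ (x : EReal) < b}

/-- The interval `[a, b)` with a possibly infinite right endpoint. -/
def Ico' (a : ℝ) (b : EReal) : Set ℝ := {x : ℝ | a ≤ x ∧ (x : EReal) < b}

/-- The interval `(a, b]` with a possibly infinite left endpoint. -/
def Ioc' (a : EReal) (b : ℝ) : Set ℝ := {x : ℝ | a < (x : EReal) ∧ x ≤ b}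

/-- Identification of sheaves on the topological space `ℝ` with objects of `RealSheafCat`. -/
def toRS (F : TopCat.Sheaf (ModuleCat.{0} k) (TopCat.of ℝ)) : RealSheafCat k := F


/-!
Write `I = [a, b)`, `J = [c, d]` and `e` for the constant section `1` of `k_I` over `{y < b}`
(`oneIio`). Let `f : k_I ⟶ k_J`, `s` a section over `V` and `x ∈ V ∩ I ∩ J`. On a small ball
`B ∋ x` the section `s` is constant on the interval `B ∩ I`, so over `B ∩ {y < b}` it equals
`s x • e`, and naturality gives `f(s)(x) = s(x) · f(e)(x)`. As `J ∩ {y < b}` is connected,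
`f(e)` is a constant `λ_f` on it, while at points of `J` outside `I` every `f(s)` vanishes,
since `s` vanishes near them. Hence `f` is determined by `λ_f = f(e)(c)`. If `a ≤ c < b`, then
`f = λ_f • φ` for the morphism `φ` that restricts to `I ∩ J` and extends by zero, and
`φ(e)(c) = 1`. Otherwise `I ∩ J` is empty or `c < a`, and then `λ_f = 0` because `c ∉ I`.
-/
namespace IntervalSheaf

open Opposite

variable {k}

section Sections

variable {I V : Set ℝ}

lemma section_apply_eq_of_isPreconnected (s : secSub k I V) {P : Set ℝ}
    (hP : _root_.IsPreconnected P) (hPV : P ⊆ V ∩ I) {y z : ℝ} (hy : y ∈ P) (hz : z ∈ P) :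
    s.1 ⟨y, hPV hy⟩ = s.1 ⟨z, hPV hz⟩ := by
  have hpre : _root_.IsPreconnected (Subtype.val ⁻¹' P : Set ↥(V ∩ I)) := by
    rwa [← Topology.IsInducing.subtypeVal.isPreconnected_image, Subtype.image_preimage_coe,
      inter_eq_right.mpr hPV]
  exact s.2.1.apply_eq_of_isPreconnected hpre hy hz

lemma section_eventually_eq_zero (s : secSub k I V) {p : ℝ} (hpV : p ∈ V) (hpI : p ∉ I) :
    ∀ᶠ y in 𝓝 p, ∀ hy : y ∈ V ∩ I, s.1 ⟨y, hy⟩ = 0 := by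
  have hp : p ∉ closure {y : ℝ | ∃ h : y ∈ V ∩ I, s.1 ⟨y, h⟩ ≠ 0} :=
    fun hcl => hpI (s.2.2 p hpV hcl).1.2
  rw [mem_closure_iff_frequently, Filter.not_frequently] at hp
  simpa using hp

def oneSection (hIV : V ∩ closure I ⊆ I) : secSub k I V :=
  ⟨fun _ => 1, IsLocallyConstant.const 1, fun _ hxV hxcl =>
    have hsupp : {y : ℝ | ∃ _ : y ∈ V ∩ I, (1 : k) ≠ 0} ⊆ I := fun _ ⟨h, _⟩ => h.2
    ⟨⟨hxV, hIV ⟨hxV, closure_mono hsupp hxcl⟩⟩, one_ne_zero⟩⟩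

end Sections

section Morphisms

variable {I J : Set ℝ}

lemma app_apply_res (f : intervalSheaf k I ⟶ intervalSheaf k J) {U V : Opens (TopCat.of ℝ)}
    (hUV : U ≤ V) (s : secSub k I V.1) {y : ℝ} (hy : y ∈ U.1 ∩ J) :
    (f.hom.app (op U) (resLM k I hUV s)).1 ⟨y, hy⟩ = (f.hom.app (op V) s).1 ⟨y, hUV hy.1, hy.2⟩ :=
  congrFun (congrArg Subtype.val (congrArg (fun g : (intervalPresheaf k I).obj (op V) ⟶
    (intervalPresheaf k J).obj (op U) => g s) (f.hom.naturality (homOfLE hUV).op))) ⟨y, hy⟩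

lemma app_apply_eq_zero_of_notMem (f : intervalSheaf k I ⟶ intervalSheaf k J)
    (V : Opens (TopCat.of ℝ)) (s : secSub k I V.1) {x : ℝ} (hx : x ∈ V.1 ∩ J) (hxI : x ∉ I) :
    (f.hom.app (op V) s).1 ⟨x, hx⟩ = 0 := by
  obtain ⟨O, hzero, hO, hxO⟩ := eventually_nhds_iff.1 (section_eventually_eq_zero s hx.1 hxI)
  let U : Opens (TopCat.of ℝ) := ⟨V.1 ∩ O, V.2.inter hO⟩
  have hUV : U ≤ V := fun _ hy => hy.1
  have hres : resLM k I hUV s = 0 := Subtype.ext <| funext fun y => hzero y.1 y.2.1.2 _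
  rw [← app_apply_res f hUV s (y := x) ⟨⟨hx.1, hxO⟩, hx.2⟩, hres]
  erw [map_zero]
  rfl

lemma hom_ext {f g : intervalSheaf k I ⟶ intervalSheaf k J}
    (h : ∀ (V : Opens (TopCat.of ℝ)) (s : secSub k I V.1) (y : ↥(V.1 ∩ J)),
      (f.hom.app (op V) s).1 y = (g.hom.app (op V) s).1 y) : f = g :=
  Sheaf.hom_ext <| NatTrans.ext <| funext fun V => ModuleCat.hom_ext <| LinearMap.ext fun s =>
    Subtype.ext <| funext (h V.unop s)

lemma smul_app_apply (r : k) (f : intervalSheaf k I ⟶ intervalSheaf k J)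
    (V : Opens (TopCat.of ℝ)) (s : secSub k I V.1) (y : ↥(V.1 ∩ J)) :
    ((r • f).hom.app (op V) s).1 y = r * (f.hom.app (op V) s).1 y :=
  rfl

end Morphisms

section Ico

lemma ordConnected_setOf_coe_lt (b : EReal) : {y : ℝ | (y : EReal) < b}.OrdConnected :=
  ⟨fun _ _ _ hz _ hw => (EReal.coe_le_coe_iff.2 hw.2).trans_lt hz⟩

lemma ordConnected_Ico' (a : ℝ) (b : EReal) : (Ico' a b).OrdConnected :=
  ordConnected_Ici.inter (ordConnected_setOf_coe_lt b)

lemma setOf_coe_lt_inter_closure_Ico' (a : ℝ) (b : EReal) :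
    {y : ℝ | (y : EReal) < b} ∩ closure (Ico' a b) ⊆ Ico' a b :=
  fun _ ⟨hyb, hycl⟩ => ⟨closure_minimal (fun _ hz => hz.1) isClosed_Ici hycl, hyb⟩

def opensIio (b : EReal) : Opens (TopCat.of ℝ) :=
  ⟨{y : ℝ | (y : EReal) < b}, isOpen_lt continuous_coe_real_ereal continuous_const⟩

def oneIio (a : ℝ) (b : EReal) : secSub k (Ico' a b) (opensIio b).1 :=
  oneSection (setOf_coe_lt_inter_closure_Ico' a b)

lemma Ico'_mem_nhdsWithin_Icc {a c : ℝ} (b : EReal) (d : ℝ) (hac : a ≤ c) :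
    ∀ y ∈ Icc c d ∩ Ico' a b, Ico' a b ∈ 𝓝[Icc c d] y := fun _ hy =>
  mem_nhdsWithin_iff_exists_mem_nhds_inter.2
    ⟨_, (opensIio b).2.mem_nhds hy.2.2, fun _ hz => ⟨hac.trans hz.2.1, hz.1⟩⟩

lemma app_apply_eq_mul_app_oneIio {a : ℝ} {b : EReal} {J : Set ℝ}
    (f : intervalSheaf k (Ico' a b) ⟶ intervalSheaf k J) (V : Opens (TopCat.of ℝ))
    (s : secSub k (Ico' a b) V.1) {x : ℝ} (hx : x ∈ V.1 ∩ J) (hxI : x ∈ Ico' a b) :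
    (f.hom.app (op V) s).1 ⟨x, hx⟩
      = s.1 ⟨x, hx.1, hxI⟩ * (f.hom.app (op (opensIio b)) (oneIio a b)).1 ⟨x, hxI.2, hx.2⟩ := by
  obtain ⟨ε, hε, hball⟩ := Metric.isOpen_iff.1 V.2 x hx.1
  let U : Opens (TopCat.of ℝ) := ⟨Metric.ball x ε ∩ {y : ℝ | (y : EReal) < b},
    Metric.isOpen_ball.inter (opensIio b).2⟩
  have hUV : U ≤ V := fun _ hy => hball hy.1
  have hUb : U ≤ opensIio b := fun _ hy => hy.2
  have hxU : x ∈ U.1 := ⟨Metric.mem_ball_self hε, hxI.2⟩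
  have hres : resLM k _ hUV s = s.1 ⟨x, hx.1, hxI⟩ • resLM k _ hUb (oneIio a b) := by
    have hP : _root_.IsPreconnected (Metric.ball x ε ∩ Ico' a b) := by
      rw [Real.ball_eq_Ioo]
      exact (ordConnected_Ioo.inter (ordConnected_Ico' a b)).isPreconnected
    have hPV : Metric.ball x ε ∩ Ico' a b ⊆ V.1 ∩ Ico' a b := fun y hy => ⟨hball hy.1, hy.2⟩
    refine Subtype.ext <| funext fun y => ?_
    change s.1 _ = s.1 _ * 1
    rw [mul_one]
    exact section_apply_eq_of_isPreconnected s hP hPV ⟨y.2.1.1, y.2.2⟩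
      ⟨Metric.mem_ball_self hε, hxI⟩
  calc (f.hom.app (op V) s).1 ⟨x, hx⟩
      = (f.hom.app (op U) (resLM k _ hUV s)).1 ⟨x, hxU, hx.2⟩ := (app_apply_res f hUV s _).symm
    _ = s.1 ⟨x, hx.1, hxI⟩ * (f.hom.app (op U) (resLM k _ hUb (oneIio a b))).1 ⟨x, hxU, hx.2⟩ := by
      rw [hres]
      erw [map_smul]
      rfl
    _ = _ := congrArg (_ * ·) (app_apply_res f hUb _ _)

lemma app_apply_eq_mul {a : ℝ} {b : EReal} {J : Set ℝ} (hJ : J.OrdConnected)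
    (f : intervalSheaf k (Ico' a b) ⟶ intervalSheaf k J) (V : Opens (TopCat.of ℝ))
    (s : secSub k (Ico' a b) V.1) {x : ℝ} (hx : x ∈ V.1 ∩ J) (hxI : x ∈ Ico' a b) {z : ℝ}
    (hz : z ∈ (opensIio b).1 ∩ J) :
    (f.hom.app (op V) s).1 ⟨x, hx⟩
      = s.1 ⟨x, hx.1, hxI⟩ * (f.hom.app (op (opensIio b)) (oneIio a b)).1 ⟨z, hz⟩ := by
  rw [app_apply_eq_mul_app_oneIio f V s hx hxI]
  congr 1
  exact section_apply_eq_of_isPreconnected _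
    ((ordConnected_setOf_coe_lt b).inter hJ).isPreconnected subset_rfl ⟨hxI.2, hx.2⟩ hz

end Ico

section ExtendByZero

variable {I J : Set ℝ}

open Classical in
def extendByZeroLM (I J V : Set ℝ) : (↥(V ∩ I) → k) →ₗ[k] (↥(V ∩ J) → k) where
  toFun s y := if h : y.1 ∈ I then s ⟨y.1, y.2.1, h⟩ else 0
  map_add' s t := funext fun y => by by_cases h : y.1 ∈ I <;> simp [h]
  map_smul' r s := funext fun y => by by_cases h : y.1 ∈ I <;> simp [h]

lemma extendByZeroLM_mem (hJ : IsClosed J) (hIJ : ∀ y ∈ J ∩ I, I ∈ 𝓝[J] y) {V : Set ℝ}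
    {s : ↥(V ∩ I) → k} (hs : s ∈ secSub k I V) : extendByZeroLM I J V s ∈ secSub k J V := by
  refine ⟨(IsLocallyConstant.iff_eventually_eq _).2 fun y => ?_, fun x hxV hxcl => ?_⟩
  · rw [nhds_subtype, Filter.eventually_comap]
    by_cases hyI : y.1 ∈ I
    · have hloc := hs.1.eventually_eq ⟨y.1, y.2.1, hyI⟩
      rw [nhds_subtype, Filter.eventually_comap] at hloc
      filter_upwards [hloc, eventually_nhdsWithin_iff.1 (hIJ y.1 ⟨y.2.2, hyI⟩)] with z hz hzI
      rintro w rfl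
      have hwI : w.1 ∈ I := hzI w.2.2
      simpa [extendByZeroLM, hwI, hyI] using hz ⟨w.1, w.2.1, hwI⟩ rfl
    · filter_upwards [section_eventually_eq_zero ⟨s, hs⟩ y.2.1 hyI] with z hz
      rintro w rfl
      by_cases hwI : w.1 ∈ I
      · simpa [extendByZeroLM, hwI, hyI] using hz ⟨w.2.1, hwI⟩
      · simp [extendByZeroLM, hwI, hyI]
  · have hsub : {y : ℝ | ∃ h : y ∈ V ∩ J, extendByZeroLM I J V s ⟨y, h⟩ ≠ 0}
        ⊆ {y : ℝ | ∃ h : y ∈ V ∩ I, s ⟨y, h⟩ ≠ 0} ∩ J := by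
      rintro y ⟨h, hy⟩
      by_cases hyI : y ∈ I
      · simp only [extendByZeroLM, LinearMap.coe_mk, AddHom.coe_mk, dif_pos hyI] at hy
        exact ⟨⟨⟨h.1, hyI⟩, hy⟩, h.2⟩
      · simp [extendByZeroLM, hyI] at hy
    have hxcl_J := (closure_inter_subset_inter_closure _ _ (closure_mono hsub hxcl))
    rw [hJ.closure_eq] at hxcl_J
    obtain ⟨hxVI, hsx⟩ := hs.2 x hxV hxcl_J.1
    exact ⟨⟨hxV, hxcl_J.2⟩, by simpa [extendByZeroLM, hxVI.2] using hsx⟩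

def extendByZeroHom (hJ : IsClosed J) (hIJ : ∀ y ∈ J ∩ I, I ∈ 𝓝[J] y) :
    intervalSheaf k I ⟶ intervalSheaf k J :=
  ⟨{ app := fun V => ModuleCat.ofHom ((extendByZeroLM I J V.unop.1).restrict
        fun _ hs => extendByZeroLM_mem hJ hIJ hs)
     naturality := fun _ _ _ => rfl }⟩

open Classical in
lemma extendByZeroHom_app_apply (hJ : IsClosed J) (hIJ : ∀ y ∈ J ∩ I, I ∈ 𝓝[J] y)
    (V : Opens (TopCat.of ℝ)) (s : secSub k I V.1) (y : ↥(V.1 ∩ J)) :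
    ((extendByZeroHom hJ hIJ).hom.app (op V) s).1 y
      = if h : y.1 ∈ I then s.1 ⟨y.1, y.2.1, h⟩ else 0 :=
  rfl

end ExtendByZero

end IntervalSheaf

open IntervalSheaf Opposite

theorem hom_ico_compact_general (k : Type) [Field k] (a : ℝ) (b : EReal)
    (c d : ℝ) (hcd : c ≤ d) :
    ((a ≤ c ∧ (c : EReal) < b) →
      Module.rank k (intervalSheaf k (Ico' a b) ⟶ intervalSheaf k (Set.Icc c d)) = 1) ∧
    (¬ (a ≤ c ∧ (c : EReal) < b) →
      ∀ f : intervalSheaf k (Ico' a b) ⟶ intervalSheaf k (Set.Icc c d), f = 0) := by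
  refine ⟨fun ⟨hac, hcb⟩ => ?_, fun hc f => hom_ext fun V s y => ?_⟩
  · have hcJ : c ∈ (opensIio b).1 ∩ Icc c d := ⟨hcb, le_rfl, hcd⟩
    let φ := extendByZeroHom (k := k) isClosed_Icc (Ico'_mem_nhdsWithin_Icc b d hac)
    have hφ : (φ.hom.app (op (opensIio b)) (oneIio a b)).1 ⟨c, hcJ⟩ = 1 := by
      rw [extendByZeroHom_app_apply, dif_pos ⟨hac, hcb⟩]
      rfl
    refine rank_eq_one_iff.2 ⟨φ, fun h => ?_, fun f =>
      ⟨(f.hom.app (op (opensIio b)) (oneIio a b)).1 ⟨c, hcJ⟩, hom_ext fun V s y => ?_⟩⟩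
    · rw [h] at hφ
      exact zero_ne_one hφ
    rw [smul_app_apply, extendByZeroHom_app_apply]
    by_cases hyI : y.1 ∈ Ico' a b
    · rw [dif_pos hyI, app_apply_eq_mul ordConnected_Icc f V s y.2 hyI hcJ, mul_comm]
    · rw [dif_neg hyI, mul_zero, app_apply_eq_zero_of_notMem f V s y.2 hyI]
  by_cases hyI : y.1 ∈ Ico' a b
  · have hcb : (c : EReal) < b := (EReal.coe_le_coe_iff.2 y.2.2.1).trans_lt hyI.2
    have hcJ : c ∈ (opensIio b).1 ∩ Icc c d := ⟨hcb, le_rfl, hcd⟩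
    rw [app_apply_eq_mul ordConnected_Icc f V s y.2 hyI hcJ,
      app_apply_eq_zero_of_notMem f _ _ hcJ fun hcI => hc ⟨hcI.1, hcb⟩, mul_zero]
    rfl
  · rw [app_apply_eq_zero_of_notMem f V s y.2 hyI]
    rfl

/-- For `a ∈ ℝ`, `b ∈ ℝ ∪ {+∞}` with `a < b`, and real numbers `c ≤ d`,
the space `Hom(k_{[a,b)}, k_{[c,d]})` is one-dimensional over `k` if `a ≤ c < b`,
and is zero otherwise. -/
theorem hom_ico_compact (k : Type) [Field k] (a : ℝ) (b : EReal) (hab : (a : EReal) < b)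
    (c d : ℝ) (hcd : c ≤ d) :
    ((a ≤ c ∧ (c : EReal) < b) →
      Module.rank k (intervalSheaf k (Ico' a b) ⟶ intervalSheaf k (Set.Icc c d)) = 1) ∧
    (¬ (a ≤ c ∧ (c : EReal) < b) →
      ∀ f : intervalSheaf k (Ico' a b) ⟶ intervalSheaf k (Set.Icc c d), f = 0) :=
  hom_ico_compact_general k a b c d hcd

end
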